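/- arXiv:1408.1970 — 3 statements merged into one kernel-verified Lean document; each statement's English description precedes it below -/
import Mathlib

section
/- Let (C, J) be a small site and X an object of C, and endow the over category C/X with the induced (over) topology J/X, in which a sieve on an object (f : Y → X) is covering if and only if its image under the forgetful functor C/X ⥤ C generates a J-covering sieve of Y. Then the restriction functor j* from the category of abelian sheaves on (C, J) to the category of abelian sheaves on (C/X, J/X), given by precomposition with the (opposite of the) forgetful functor, is well-defined and admits a left adjoint j_! which is an exact functor (it preserves finite limits and finite colimits of abelian sheaves). -/
/-!
Before sheafification, `j_! F` is the left Kan extension of `F` along `(C/X)ᵒᵖ ⥤ Cᵒᵖ`, whose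
value at `K` is a colimit over the costructured arrows `K ⟶ Y` with `Y ⟶ X`. The objects
`(h, 𝟙 K)` with `h : K ⟶ X` form a final discrete subcategory (its inclusion is a right
adjoint), so this colimit is the coproduct `⨁_{K ⟶ X} F (K ⟶ X)`, which is exact in an AB4
category such as abelian groups. Sheafification is exact, and `j_!` preserves colimits as a left adjoint.
-/

open CategoryTheory CategoryTheory.Limits Opposite

universe u

namespace CategoryTheory.Over

variable {C : Type*} [Category C] {X : C} {K : Cᵒᵖ}

lemma costructuredArrow_forget_op_w {c c' : CostructuredArrow (Over.forget X).op K}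
    (g : c ⟶ c') : c'.hom.unop ≫ g.left.unop.left = c.hom.unop :=
  congrArg Quiver.Hom.unop (CostructuredArrow.w g)

lemma costructuredArrow_forget_op_hom_comp {c c' : CostructuredArrow (Over.forget X).op K}
    (g : c ⟶ c') : c.hom.unop ≫ c.left.unop.hom = c'.hom.unop ≫ c'.left.unop.hom :=
  calc c.hom.unop ≫ c.left.unop.hom
      = (c'.hom.unop ≫ g.left.unop.left) ≫ c.left.unop.hom :=
        congrArg (· ≫ _) (costructuredArrow_forget_op_w g).symm
    _ = c'.hom.unop ≫ g.left.unop.left ≫ c.left.unop.hom := Category.assoc _ _ _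
    _ = c'.hom.unop ≫ c'.left.unop.hom := congrArg (_ ≫ ·) (Over.w g.left.unop)

variable (X K)

def discreteToCostructuredArrowForgetOp :
    Discrete (K.unop ⟶ X) ⥤ CostructuredArrow (Over.forget X).op K :=
  Discrete.functor fun h => CostructuredArrow.mk (Y := op (Over.mk h)) (𝟙 K)

def costructuredArrowForgetOpToDiscrete :
    CostructuredArrow (Over.forget X).op K ⥤ Discrete (K.unop ⟶ X) where
  obj c := ⟨c.hom.unop ≫ c.left.unop.hom⟩
  map g := eqToHom (congrArg Discrete.mk (costructuredArrow_forget_op_hom_comp g))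

instance subsingleton_hom_discreteToCostructuredArrowForgetOp_obj
    (c : CostructuredArrow (Over.forget X).op K) (h : Discrete (K.unop ⟶ X)) :
    Subsingleton (c ⟶ (discreteToCostructuredArrowForgetOp X K).obj h) where
  allEq g g' := CostructuredArrow.hom_ext _ _ <| Quiver.Hom.unop_inj <| Over.OverMorphism.ext <|
    ((Category.id_comp _).symm.trans (costructuredArrow_forget_op_w g)).trans
      ((Category.id_comp _).symm.trans (costructuredArrow_forget_op_w g')).symm

def costructuredArrowForgetOpAdjunction :
    costructuredArrowForgetOpToDiscrete X K ⊣ discreteToCostructuredArrowForgetOp X K :=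
  Adjunction.mkOfHomEquiv
    { homEquiv c h :=
        { toFun e := CostructuredArrow.homMk (Over.homMk c.hom.unop (Discrete.eq_of_hom e)).op
            (Category.comp_id _)
          invFun g := eqToHom (congrArg Discrete.mk
            ((costructuredArrow_forget_op_hom_comp g).trans (Category.id_comp h.as)))
          left_inv _ := Subsingleton.elim _ _
          right_inv _ := Subsingleton.elim _ _ }
      homEquiv_naturality_right _ _ := Subsingleton.elim _ _ }

instance final_discreteToCostructuredArrowForgetOp :
    (discreteToCostructuredArrowForgetOp X K).Final :=
  Functor.final_of_adjunction (costructuredArrowForgetOpAdjunction X K)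

end CategoryTheory.Over

namespace CategoryTheory

variable {A : Type*} [Category.{u} A] [HasFiniteLimits A]

lemma Functor.preservesFiniteLimits_lan {C D : Type u} [SmallCategory C] [SmallCategory D]
    (F : C ⥤ D) [∀ K, HasColimitsOfShape (CostructuredArrow F K) A]
    [∀ K, HasExactColimitsOfShape (CostructuredArrow F K) A] :
    PreservesFiniteLimits (F.lan : (C ⥤ A) ⥤ (D ⥤ A)) :=
  preservesFiniteLimits_of_evaluation _ fun K =>
    have : PreservesFiniteLimits
        ((Functor.whiskeringLeft _ _ A).obj (CostructuredArrow.proj F K)) :=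
      ⟨fun _ _ _ => inferInstance⟩
    have := comp_preservesFiniteLimits
      ((Functor.whiskeringLeft _ _ A).obj (CostructuredArrow.proj F K)) colim
    preservesFiniteLimits_of_natIso (lanEvaluationIsoColim A F K).symm

lemma Functor.preservesFiniteLimits_sheafPullback {C D : Type u} [SmallCategory C]
    [SmallCategory D] (G : C ⥤ D) (J : GrothendieckTopology C) (K : GrothendieckTopology D)
    [G.IsContinuous J K] [HasColimits A] [HasSheafify K A]
    [PreservesFiniteLimits (G.op.lan : (Cᵒᵖ ⥤ A) ⥤ (Dᵒᵖ ⥤ A))] :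
    PreservesFiniteLimits (G.sheafPullback A J K) :=
  have : PreservesFiniteLimits (G.op.lan ⋙ presheafToSheaf K A) := comp_preservesFiniteLimits _ _
  have : PreservesFiniteLimits (sheafPullbackConstruction.sheafPullback G A J K) :=
    comp_preservesFiniteLimits _ _
  preservesFiniteLimits_of_natIso (sheafPullbackConstruction.sheafPullbackIso G A J K).symm

variable {C : Type u} [SmallCategory C] (X : C) [HasColimits A] [AB4 A]

instance Over.hasExactColimitsOfShape_costructuredArrow_forget_op (K : Cᵒᵖ) :
    HasExactColimitsOfShape (CostructuredArrow (Over.forget X).op K) A :=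
  hasExactColimitsOfShape_of_final A (Over.discreteToCostructuredArrowForgetOp X K)

instance Over.preservesFiniteLimits_sheafPullback_forget (J : GrothendieckTopology C)
    [HasSheafify J A] : PreservesFiniteLimits ((Over.forget X).sheafPullback A (J.over X) J) :=
  have := (Over.forget X).op.preservesFiniteLimits_lan (A := A)
  (Over.forget X).preservesFiniteLimits_sheafPullback (J.over X) J

end CategoryTheory

/-- Let `(C, J)` be a small site and `X : C`, and endow `C/X` with the induced (over)
topology `J.over X`.  The restriction functor `j*` on abelian sheaves, given by
precomposition with the (opposite of the) forgetful functor `C/X ⥤ C`, is well-defined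
and admits a left adjoint `j_!` which is exact (it preserves finite limits and finite
colimits). -/
theorem over_restriction_abelian_sheaves_has_exact_left_adjoint {C : Type u}
    [SmallCategory C] (J : GrothendieckTopology C) (X : C) :
    ∃ (jShriek : Sheaf (J.over X) AddCommGrpCat.{u} ⥤ Sheaf J AddCommGrpCat.{u})
      (_ : jShriek ⊣ (Over.forget X).sheafPushforwardContinuous AddCommGrpCat.{u} (J.over X) J),
      Nonempty (PreservesFiniteLimits jShriek) ∧ Nonempty (PreservesFiniteColimits jShriek) :=
  let adj := (Over.forget X).sheafAdjunctionContinuous AddCommGrpCat.{u} (J.over X) J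
  have := adj.leftAdjoint_preservesColimits
  ⟨_, adj, ⟨inferInstance⟩, ⟨inferInstance⟩⟩
end

section
/- Let C be a category with a terminal object and binary products, and let U be a subterminal object of C (i.e., every object of C admits at most one morphism to U; equivalently, the unique morphism U → ⊤ to the terminal object is a monomorphism). Let j* : C ⥤ C/U be the functor sending an object Y to the first projection fst : U ⨯ Y → U, viewed as an object of the over category C/U. If j* admits a right adjoint j_* : C/U ⥤ C, then j_* is fully faithful. -/
open CategoryTheory CategoryTheory.Limits

universe v u

/-- The functor `j* : C ⥤ C/U` sending an object `Y` to the first projection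
`fst : U ⨯ Y ⟶ U`, viewed as an object of the over category `C/U`. -/
@[simps]
noncomputable def jstarFunctor {C : Type u} [Category.{v} C] [HasBinaryProducts C] (U : C) :
    C ⥤ Over U where
  obj Y := Over.mk (prod.fst : U ⨯ Y ⟶ U)
  map {Y Z} f := Over.homMk (prod.map (𝟙 U) f) (by simp)

/-!
Over a subterminal `U` every morphism of `C` commutes with the structure maps, so the forgetful
functor `C/U ⥤ C` is fully faithful. It is left adjoint to `j*`, so `forget ⊣ j* ⊣ j_*` is an
adjoint triple, and in an adjoint triple the left adjoint is fully faithful iff the right one is.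
-/

section

variable {C : Type u} [Category.{v} C]

def Over.fullyFaithfulForgetOfIsSubterminal {U : C} (hU : IsSubterminal U) :
    (Over.forget U).FullyFaithful where
  preimage f := Over.homMk f (hU _ _)

variable [HasBinaryProducts C]

noncomputable def jstarFunctorIsoStar (U : C) : jstarFunctor U ≅ Over.star U :=
  NatIso.ofComponents
    (fun Y => Over.isoMk (Iso.refl (U ⨯ Y)) ((Category.id_comp _).trans (prod.lift_fst _ _)))
    fun _ => by ext; exact (Category.comp_id _).trans (Category.id_comp _).symm

end

theorem right_adjoint_of_jstar_fully_faithful_general {C : Type u} [Category.{v} C]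
    [HasBinaryProducts C] (U : C) (hU : IsSubterminal U)
    (jLower : Over U ⥤ C) (adj : jstarFunctor U ⊣ jLower) :
    jLower.Full ∧ jLower.Faithful := by
  let triple : Adjunction.Triple (Over.forget U) (jstarFunctor U) jLower :=
    ⟨(Over.forgetAdjStar U).ofNatIsoRight (jstarFunctorIsoStar U).symm, adj⟩
  let ff := triple.fullyFaithfulEquiv (Over.fullyFaithfulForgetOfIsSubterminal hU)
  exact ⟨ff.full, ff.faithful⟩

/-- Let `C` be a category with a terminal object and binary products, and let `U` be a
subterminal object of `C`.  If the functor `j* : C ⥤ C/U`, `Y ↦ (fst : U ⨯ Y ⟶ U)`,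
admits a right adjoint `j_* : C/U ⥤ C`, then `j_*` is fully faithful. -/
theorem right_adjoint_of_jstar_fully_faithful {C : Type u} [Category.{v} C]
    [HasTerminal C] [HasBinaryProducts C] (U : C) (hU : IsSubterminal U)
    (jLower : Over U ⥤ C) (adj : jstarFunctor U ⊣ jLower) :
    jLower.Full ∧ jLower.Faithful :=
  right_adjoint_of_jstar_fully_faithful_general U hU jLower adj
end

section
/- Let (C, J) be a small site and let T denote the category of sheaves of types on (C, J), which has all small limits and colimits. Let U be a subterminal object of T (every object of T admits at most one morphism to U). Let Z be the full subcategory of T consisting of those sheaves F for which the first projection fst : U ⨯ F → U is an isomorphism. Then: (1) for every sheaf F in T, the pushout i*F := U ⨿_{U ⨯ F} F of fst : U ⨯ F → U along snd : U ⨯ F → F belongs to Z; and (2) the assignment F ↦ i*F defines a left adjoint to the inclusion functor Z ↪ T, whose unit at F is the canonical morphism F → U ⨿_{U ⨯ F} F into the pushout. -/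
/-!
As `U ⨯ -` preserves pushouts (a sheaf topos is cartesian closed), `U ⨯ (U ⨿_{U ⨯ F} F)` is
the pushout of `U ⨯ U ← U ⨯ (U ⨯ F) → U ⨯ F`. Since `U` is subterminal, the two projections
`U ⨯ U ⟶ U` agree, which forces `fst ≫ inl = snd` on `U ⨯ (U ⨿_{U ⨯ F} F)`; hence
`⟨𝟙, inl⟩` is inverse to `fst`.

If `fst : U ⨯ G ⟶ U` is invertible, then any object over `U` has at most one map to `G`, and `U`
itself has one, `inv fst ≫ snd`. So a map `F ⟶ G` extends uniquely along
`inr : F ⟶ U ⨿_{U ⨯ F} F`, which is the universal property of the unit of the reflection.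
-/

open CategoryTheory CategoryTheory.Limits

universe u

namespace CategoryTheory

variable {𝒞 : Type*} [Category 𝒞] [HasBinaryProducts 𝒞]

lemma hom_ext_of_mono_prod_fst {U G X : 𝒞} [Mono (prod.fst : U ⨯ G ⟶ U)] (w : X ⟶ U)
    (f g : X ⟶ G) : f = g := by
  have h : prod.lift w f = prod.lift w g := by
    rw [← cancel_mono (prod.fst : U ⨯ G ⟶ U), prod.lift_fst, prod.lift_fst]
  simpa only [prod.lift_snd] using h =≫ prod.snd

-- In a topos: the closed subtopos complementary to the open subtopos of a subterminal `U`.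
abbrev closedComplement (U : 𝒞) : ObjectProperty 𝒞 := fun G => IsIso (prod.fst : U ⨯ G ⟶ U)

variable [HasPushouts 𝒞] {U : 𝒞}

noncomputable def pushoutFstSndHomEquiv (F : 𝒞) {G : 𝒞} [IsIso (prod.fst : U ⨯ G ⟶ U)] :
    (pushout (prod.fst : U ⨯ F ⟶ U) prod.snd ⟶ G) ≃ (F ⟶ G) where
  toFun φ := pushout.inr _ _ ≫ φ
  invFun g := pushout.desc (inv (prod.fst : U ⨯ G ⟶ U) ≫ prod.snd) g
    (hom_ext_of_mono_prod_fst prod.fst _ _)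
  left_inv _ := pushout.hom_ext (hom_ext_of_mono_prod_fst (𝟙 U) _ _) (pushout.inr_desc _ _ _)
  right_inv _ := pushout.inr_desc _ _ _

variable [PreservesColimitsOfShape WalkingSpan (prod.functor.obj U)]

lemma closedComplement_pushout_fst_snd (hU : IsSubterminal U) (F : 𝒞) :
    closedComplement U (pushout (prod.fst : U ⨯ F ⟶ U) prod.snd) := by
  set P := pushout (prod.fst : U ⨯ F ⟶ U) prod.snd
  have hpo : IsPushout (prod.map (𝟙 U) prod.fst) (prod.map (𝟙 U) prod.snd)
      (prod.map (𝟙 U) (pushout.inl _ _)) (prod.map (𝟙 U) (pushout.inr _ _) : U ⨯ F ⟶ U ⨯ P) :=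
    (IsPushout.of_hasPushout _ _).map (prod.functor.obj U)
  have hfst : (prod.fst : U ⨯ P ⟶ U) ≫ pushout.inl _ _ = prod.snd := by
    apply hpo.hom_ext <;> rw [prod.map_fst_assoc, prod.map_snd, Category.id_comp]
    · exact hU _ _ =≫ _
    · exact pushout.condition
  exact ⟨prod.lift (𝟙 U) (pushout.inl _ _), by ext <;> simp [hfst], prod.lift_fst _ _⟩

variable (hU : IsSubterminal U)

variable (U) in
noncomputable def closedComplementHomEquiv (F : 𝒞) (G : (closedComplement U).FullSubcategory) :
    ((⟨_, closedComplement_pushout_fst_snd hU F⟩ : (closedComplement U).FullSubcategory) ⟶ G) ≃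
      (F ⟶ (closedComplement U).ι.obj G) :=
  haveI : IsIso (prod.fst : U ⨯ G.obj ⟶ U) := G.property
  (ObjectProperty.fullyFaithfulι _).homEquiv.trans (pushoutFstSndHomEquiv (G := G.obj) F)

lemma closedComplementHomEquiv_naturality (F : 𝒞)
    {G G' : (closedComplement U).FullSubcategory} (g : G ⟶ G') (φ) :
    closedComplementHomEquiv U hU F G' (φ ≫ g) =
      closedComplementHomEquiv U hU F G φ ≫ (closedComplement U).ι.map g :=
  (Category.assoc _ _ _).symm

variable (U) in
noncomputable def closedComplementReflector : 𝒞 ⥤ (closedComplement U).FullSubcategory :=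
  Adjunction.leftAdjointOfEquiv (closedComplementHomEquiv U hU)
    fun F _ _ => closedComplementHomEquiv_naturality hU F

variable (U) in
noncomputable def closedComplementAdjunction :
    closedComplementReflector U hU ⊣ (closedComplement U).ι :=
  Adjunction.adjunctionOfEquivLeft _ fun F _ _ => closedComplementHomEquiv_naturality hU F

lemma closedComplementAdjunction_unit_app (F : 𝒞) :
    (closedComplementAdjunction U hU).unit.app F = pushout.inr (prod.fst : U ⨯ F ⟶ U) prod.snd :=
  Category.comp_id _

end CategoryTheory

-- Instance search does not find `Closed U` against the cartesian monoidal structure of sheaves.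
instance Sheaf.isLeftAdjoint_prod_functor {C : Type u} [SmallCategory C]
    (J : GrothendieckTopology C) (U : Sheaf J (Type u)) : (prod.functor.obj U).IsLeftAdjoint :=
  @CartesianMonoidalCategory.isLeftAdjoint_prod_functor _ _ _ U (MonoidalClosed.closed U)

/-- Let `(C, J)` be a small site and `T` the category of sheaves of types on it.  Let `U` be
a subterminal object of `T` and let `Z` be the full subcategory of `T` of those sheaves `F`
for which `fst : U ⨯ F ⟶ U` is an isomorphism.  Then (1) for every sheaf `F`, the pushout
`i*F := U ⨿_{U ⨯ F} F` of `fst` along `snd` belongs to `Z`; and (2) `F ↦ i*F` defines a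
left adjoint to the inclusion `Z ↪ T`, whose unit at `F` is the canonical morphism
`F → U ⨿_{U ⨯ F} F` into the pushout. -/
theorem closed_complement_left_adjoint {C : Type u} [SmallCategory C]
    (J : GrothendieckTopology C) (U : Sheaf J (Type u)) (hU : IsSubterminal U) :
    (∀ F : Sheaf J (Type u),
      IsIso (prod.fst :
        U ⨯ (pushout (prod.fst : U ⨯ F ⟶ U) (prod.snd : U ⨯ F ⟶ F)) ⟶ U)) ∧
    ∃ (L : Sheaf J (Type u) ⥤
        ObjectProperty.FullSubcategory (fun F : Sheaf J (Type u) => IsIso (prod.fst : U ⨯ F ⟶ U)))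
      (adj : L ⊣ ObjectProperty.ι
        (fun F : Sheaf J (Type u) => IsIso (prod.fst : U ⨯ F ⟶ U))),
      ∀ F : Sheaf J (Type u),
        ∃ e : (ObjectProperty.ι
            (fun F : Sheaf J (Type u) => IsIso (prod.fst : U ⨯ F ⟶ U))).obj (L.obj F) ≅
            pushout (prod.fst : U ⨯ F ⟶ U) (prod.snd : U ⨯ F ⟶ F),
          adj.unit.app F ≫ e.hom =
            pushout.inr (prod.fst : U ⨯ F ⟶ U) (prod.snd : U ⨯ F ⟶ F) := by
  refine ⟨closedComplement_pushout_fst_snd hU, closedComplementReflector U hU,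
    closedComplementAdjunction U hU, fun F => ⟨Iso.refl _, ?_⟩⟩
  exact (Category.comp_id _).trans (closedComplementAdjunction_unit_app hU F)
end
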